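/- Under the MWU misclassification dynamics with ρ = 3/4, suppose n ≥ 1, the dynamics is c-bounded with c = 1/5, 0 < ε < 1, and the number of rounds T satisfies T ≥ 5 · log₂(1/ε). Then the set S = {x ∈ D : |{t ∈ {1,…,T} : x ∈ M_t}| ≥ T/2} of points lying in at least half of the sets M_1, …, M_T satisfies |S| < ε · n. -/

import Mathlib

/-!
Every point of `D` starts with weight `1` and its weight is multiplied by `1 + ρ` each time it is
misclassified. By `c`-boundedness the total weight grows by a factor of at most `1 + ρ c` per
round, so after `T` rounds it is at most `n (1 + ρ c)^T`. A point misclassified in at least half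
of the rounds alone has weight at least `√(1 + ρ)^T`. Hence the number of such points is at most
`n ((1 + ρ c) / √(1 + ρ))^T`, and for `ρ = 3/4`, `c = 1/5` the ratio `(23/20) / √(7/4)` has fifth
power below `1/2`, so this is less than `ε n` once `T ≥ 5 log₂ (1/ε)`.
-/

namespace MWU

open Finset

variable {α : Type*} [DecidableEq α]

def hitCount (M : ℕ → Finset α) (t : ℕ) (x : α) : ℕ :=
  ((Icc 1 t).filter (fun s => x ∈ M s)).card

def weight (ρ : ℝ) (M : ℕ → Finset α) (t : ℕ) (x : α) : ℝ :=
  (1 + ρ) ^ hitCount M t x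

lemma hitCount_succ (M : ℕ → Finset α) (t : ℕ) (x : α) :
    hitCount M (t + 1) x = hitCount M t x + if x ∈ M (t + 1) then 1 else 0 := by
  rw [hitCount, hitCount, ← insert_Icc_right_eq_Icc_add_one (by omega), filter_insert]
  split_ifs
  · exact card_insert_of_notMem (by simp)
  · rfl

lemma weight_succ (ρ : ℝ) (M : ℕ → Finset α) (t : ℕ) (x : α) :
    weight ρ M (t + 1) x = weight ρ M t x + if x ∈ M (t + 1) then ρ * weight ρ M t x else 0 := by
  rw [weight, weight, hitCount_succ]
  split_ifs <;> ring

lemma sum_weight_succ (ρ : ℝ) {D : Finset α} {M : ℕ → Finset α} {t : ℕ} (hMD : M (t + 1) ⊆ D) :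
    ∑ x ∈ D, weight ρ M (t + 1) x
      = ∑ x ∈ D, weight ρ M t x + ρ * ∑ x ∈ M (t + 1), weight ρ M t x := by
  simp only [weight_succ, sum_add_distrib, sum_ite_mem, inter_eq_right.mpr hMD, mul_sum]

lemma sum_weight_le {ρ c : ℝ} (hρ : 0 ≤ ρ) (hc : 0 ≤ c) {D : Finset α} {M : ℕ → Finset α} {T : ℕ}
    (hM : ∀ t, 1 ≤ t → t ≤ T → M t ⊆ D)
    (hbounded : ∀ t < T, ∑ x ∈ M (t + 1), weight ρ M t x ≤ c * ∑ x ∈ D, weight ρ M t x) :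
    ∀ t ≤ T, ∑ x ∈ D, weight ρ M t x ≤ D.card * (1 + ρ * c) ^ t := by
  intro t
  induction t with
  | zero => simp [weight, hitCount]
  | succ t ih =>
    intro ht
    calc ∑ x ∈ D, weight ρ M (t + 1) x
        = ∑ x ∈ D, weight ρ M t x + ρ * ∑ x ∈ M (t + 1), weight ρ M t x :=
          sum_weight_succ ρ (hM (t + 1) (by omega) ht)
      _ ≤ (1 + ρ * c) * ∑ x ∈ D, weight ρ M t x := by
          linarith [mul_le_mul_of_nonneg_left (hbounded t ht) hρ]
      _ ≤ (1 + ρ * c) * (D.card * (1 + ρ * c) ^ t) := by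
          gcongr
          exact ih (by omega)
      _ = D.card * (1 + ρ * c) ^ (t + 1) := by ring

lemma card_frequent_mul_le {ρ : ℝ} (hρ : 0 ≤ ρ) (D : Finset α) (M : ℕ → Finset α) (T : ℕ) :
    ((D.filter (fun x => T ≤ 2 * hitCount M T x)).card : ℝ) * √(1 + ρ) ^ T
      ≤ ∑ x ∈ D, weight ρ M T x := by
  have hlow : ∀ x ∈ D.filter (fun x => T ≤ 2 * hitCount M T x), √(1 + ρ) ^ T ≤ weight ρ M T x := by
    intro x hx
    calc √(1 + ρ) ^ T ≤ √(1 + ρ) ^ (2 * hitCount M T x) :=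
          pow_le_pow_right₀ (Real.one_le_sqrt.mpr (by linarith)) (mem_filter.mp hx).2
      _ = weight ρ M T x := by rw [pow_mul, Real.sq_sqrt (by linarith), weight]
  calc _ = (D.filter (fun x => T ≤ 2 * hitCount M T x)).card • √(1 + ρ) ^ T := by
        rw [nsmul_eq_mul]
    _ ≤ ∑ x ∈ D.filter (fun x => T ≤ 2 * hitCount M T x), weight ρ M T x :=
        card_nsmul_le_sum _ _ _ hlow
    _ ≤ ∑ x ∈ D, weight ρ M T x :=
        sum_le_sum_of_subset_of_nonneg (filter_subset _ _) fun x _ _ => by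
          unfold weight; positivity

theorem card_frequent_lt {ρ c ε : ℝ} (hρ : 0 ≤ ρ) (hc : 0 ≤ c) {D : Finset α}
    (hD : D.Nonempty) {M : ℕ → Finset α} {T : ℕ} (hM : ∀ t, 1 ≤ t → t ≤ T → M t ⊆ D)
    (hbounded : ∀ t < T, ∑ x ∈ M (t + 1), weight ρ M t x ≤ c * ∑ x ∈ D, weight ρ M t x)
    (hε : ((1 + ρ * c) / √(1 + ρ)) ^ T < ε) :
    ((D.filter (fun x => T ≤ 2 * hitCount M T x)).card : ℝ) < ε * D.card := by
  have hroot : 0 < √(1 + ρ) ^ T := by positivity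
  have hcard : (0 : ℝ) < D.card := by exact_mod_cast hD.card_pos
  rw [div_pow, div_lt_iff₀ hroot] at hε
  refine lt_of_mul_lt_mul_right ?_ hroot.le
  calc _ ≤ ∑ x ∈ D, weight ρ M T x := card_frequent_mul_le hρ D M T
    _ ≤ D.card * (1 + ρ * c) ^ T := sum_weight_le hρ hc hM hbounded T le_rfl
    _ < D.card * (ε * √(1 + ρ) ^ T) := by gcongr
    _ = ε * D.card * √(1 + ρ) ^ T := by ring

lemma pow_lt_of_mul_logb_le {a r ε : ℝ} {k T : ℕ} (ha : 1 < a) (hr : 0 < r) (hrk : r ^ k < a⁻¹)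
    (hε0 : 0 < ε) (hε1 : ε < 1) (hT : k * Real.logb a (1 / ε) ≤ T) : r ^ T < ε := by
  have ha_inv : a⁻¹ < 1 := inv_lt_one_of_one_lt₀ ha
  have hk : k ≠ 0 := by
    rintro rfl
    rw [pow_zero] at hrk
    linarith
  have hr1 : r ≤ 1 := ((pow_lt_one_iff_of_nonneg hr.le hk).mp (hrk.trans ha_inv)).le
  have hL : 0 < Real.logb a (1 / ε) :=
    Real.logb_pos ha (by rw [one_div]; exact one_lt_inv_iff₀.mpr ⟨hε0, hε1⟩)
  calc r ^ T = r ^ (T : ℝ) := (Real.rpow_natCast r T).symm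
    _ ≤ r ^ (k * Real.logb a (1 / ε)) := Real.rpow_le_rpow_of_exponent_ge hr hr1 hT
    _ = (r ^ k) ^ Real.logb a (1 / ε) := by rw [Real.rpow_mul hr.le, Real.rpow_natCast]
    _ < a⁻¹ ^ Real.logb a (1 / ε) := Real.rpow_lt_rpow (by positivity) hrk hL
    _ = ε := by
      rw [Real.inv_rpow (by linarith), Real.rpow_logb (by linarith) ha.ne' (by positivity),
        one_div, inv_inv]

end MWU

theorem mwu_main_bound_general {α : Type*} [DecidableEq α]
    (D : Finset α) (n : ℕ) (hn : D.card = n) (hn1 : 1 ≤ n)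
    (T : ℕ)
    (M : ℕ → Finset α) (hM : ∀ t, 1 ≤ t → t ≤ T → M t ⊆ D)
    (ε : ℝ) (hε0 : 0 < ε) (hε1 : ε < 1)
    (hTε : (T : ℝ) ≥ 5 * Real.logb 2 (1 / ε))
    (hbounded : ∀ t < T,
      ∑ x ∈ M (t + 1),
          (1 + (3/4 : ℝ)) ^ (((Finset.Icc 1 t).filter (fun s => x ∈ M s)).card)
        ≤ (1/5 : ℝ) * ∑ x ∈ D,
          (1 + (3/4 : ℝ)) ^ (((Finset.Icc 1 t).filter (fun s => x ∈ M s)).card)) :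
    ((D.filter (fun x =>
        T ≤ 2 * ((Finset.Icc 1 T).filter (fun s => x ∈ M s)).card)).card : ℝ)
      < ε * n := by
  subst hn
  have hratio : ((1 + 3/4 * (1/5)) / √(1 + 3/4) : ℝ) ^ 5 < 2⁻¹ := by
    have hsq : √(1 + 3/4 : ℝ) ^ 2 = 1 + 3/4 := Real.sq_sqrt (by norm_num)
    have hroot : (33/25 : ℝ) ≤ √(1 + 3/4) := Real.le_sqrt_of_sq_le (by norm_num)
    rw [div_pow, div_lt_iff₀ (by positivity),
      show √(1 + 3/4 : ℝ) ^ 5 = √(1 + 3/4) * (√(1 + 3/4) ^ 2) ^ 2 by ring, hsq]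
    linarith
  refine MWU.card_frequent_lt (ρ := 3/4) (c := 1/5) (by norm_num) (by norm_num)
    (Finset.card_pos.mp (by omega)) hM hbounded ?_
  exact MWU.pow_lt_of_mul_logb_le one_lt_two (by positivity) hratio hε0 hε1 (by exact_mod_cast hTε)

/-- Combinatorial core of Theorem 4.2: under the MWU misclassification dynamics with
`ρ = 3/4`, if `n ≥ 1`, the dynamics is `c`-bounded with `c = 1/5`, `0 < ε < 1`, and
the number of rounds satisfies `T ≥ 5 · log₂(1/ε)`, then the set `S` of points lying
in at least half of the sets `M 1, …, M T` satisfies `|S| < ε · n`. -/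
theorem mwu_main_bound {α : Type*} [DecidableEq α]
    (D : Finset α) (n : ℕ) (hn : D.card = n) (hn1 : 1 ≤ n)
    (T : ℕ) (hT : 0 < T)
    (M : ℕ → Finset α) (hM : ∀ t, 1 ≤ t → t ≤ T → M t ⊆ D)
    (ε : ℝ) (hε0 : 0 < ε) (hε1 : ε < 1)
    (hTε : (T : ℝ) ≥ 5 * Real.logb 2 (1 / ε))
    (hbounded : ∀ t < T,
      ∑ x ∈ M (t + 1),
          (1 + (3/4 : ℝ)) ^ (((Finset.Icc 1 t).filter (fun s => x ∈ M s)).card)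
        ≤ (1/5 : ℝ) * ∑ x ∈ D,
          (1 + (3/4 : ℝ)) ^ (((Finset.Icc 1 t).filter (fun s => x ∈ M s)).card)) :
    ((D.filter (fun x =>
        T ≤ 2 * ((Finset.Icc 1 T).filter (fun s => x ∈ M s)).card)).card : ℝ)
      < ε * n :=
  mwu_main_bound_general D n hn hn1 T M hM ε hε0 hε1 hTε hbounded
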